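/- Let 𝕋 = {z ∈ ℂ : |z| = 1} and let (Γ,Ψ) be a 𝕋-gain graph on n vertices, with complex adjacency matrix A ∈ M_n(ℂ) whose (i,j) entry is Ψ(v_i,v_j) ∈ 𝕋 if v_i ∼ v_j and 0 otherwise, and let A⁺ be the {0,1} adjacency matrix of the underlying graph Γ. Then (Γ,Ψ) is balanced if and only if A and A⁺ are cospectral (have the same spectrum with multiplicities). -/

import Mathlib

/-!
If `(Γ, Ψ)` is balanced, the gain of a walk depends only on its endpoints, so the gains
`θ v` of walks from a fixed root of each component to `v` satisfy `θ i * Ψ i j = θ j` on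
edges: conjugating `A⁺` by `diag θ` gives `A`. Conversely, `A` and `A⁺` are Hermitian, so
equal characteristic polynomials give `tr Aᵏ = tr (A⁺)ᵏ`. The first trace sums the gains of
the closed walks of length `k`, the second counts them; since the gains are unit complex
numbers, the two agree only if every gain is `1`.
-/

open scoped Kronecker
open Matrix Polynomial Filter

namespace GainPaper

variable {G : Type*} [Group G]

/-- The gain of a walk: product of the gains of its darts. -/
def walkGain {n : ℕ} {Γ : SimpleGraph (Fin n)} {M : Type*} [Monoid M]
    (Ψ : Fin n → Fin n → M) {u v : Fin n} (p : Γ.Walk u v) : M :=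
  (p.darts.map fun d => Ψ d.toProd.1 d.toProd.2).prod

/-- `Ψ` is a gain function on `Γ`: the gain of an edge in the reverse
orientation is the inverse of its gain. -/
def IsGain {n : ℕ} (Γ : SimpleGraph (Fin n)) (Ψ : Fin n → Fin n → G) : Prop :=
  ∀ i j, Γ.Adj i j → Ψ j i = (Ψ i j)⁻¹

/-- A gain graph is balanced if every closed walk has gain `1`. -/
def IsBalanced {n : ℕ} (Γ : SimpleGraph (Fin n)) {M : Type*} [Monoid M]
    (Ψ : Fin n → Fin n → M) : Prop :=
  ∀ (v : Fin n) (p : Γ.Walk v v), walkGain Ψ p = 1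

/-- The adjacency matrix of a gain graph, with entries in the group algebra ℂG. -/
noncomputable def gainAdj {n : ℕ} (Γ : SimpleGraph (Fin n)) [DecidableRel Γ.Adj]
    (Ψ : Fin n → Fin n → G) : Matrix (Fin n) (Fin n) (MonoidAlgebra ℂ G) :=
  Matrix.of fun i j => if Γ.Adj i j then MonoidAlgebra.single (Ψ i j) 1 else 0

/-- The involution on ℂG: `(Σ f_x x)* = Σ conj(f_x) x⁻¹`. -/
noncomputable def starCG (f : MonoidAlgebra ℂ G) : MonoidAlgebra ℂ G :=
  f.coeff.sum fun x c => MonoidAlgebra.single x⁻¹ (starRingEnd ℂ c)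

/-- The involution on M_n(ℂG): `(F*)_{i,j} = (F_{j,i})*`. -/
noncomputable def starM {n : ℕ} (F : Matrix (Fin n) (Fin n) (MonoidAlgebra ℂ G)) :
    Matrix (Fin n) (Fin n) (MonoidAlgebra ℂ G) :=
  Matrix.of fun i j => starCG (F j i)

/-- The trace on M_n(ℂG): sum over the diagonal of the coefficients of `1_G`. -/
noncomputable def trCG {n : ℕ} (F : Matrix (Fin n) (Fin n) (MonoidAlgebra ℂ G)) : ℂ :=
  ∑ i, (F i i).coeff 1

/-- The Fourier transform of `f ∈ ℂG` at `π`: `Σ_x f(x) π(x)`. -/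
noncomputable def fourier {m : Type*} (f : MonoidAlgebra ℂ G) (π : G → Matrix m m ℂ) :
    Matrix m m ℂ :=
  f.coeff.sum fun x c => c • π x

/-- The (finite) set of group elements appearing in some entry of `F`. -/
noncomputable def matSupport {n : ℕ} (F : Matrix (Fin n) (Fin n) (MonoidAlgebra ℂ G)) :
    Finset G :=
  letI := Classical.decEq G
  Finset.univ.biUnion fun i : Fin n => Finset.univ.biUnion fun j : Fin n => (F i j).coeff.support

/-- `F(x)`: the complex matrix of coefficients of `x` in the entries of `F`. -/
def matCoeff {n : ℕ} (F : Matrix (Fin n) (Fin n) (MonoidAlgebra ℂ G)) (x : G) :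
    Matrix (Fin n) (Fin n) ℂ :=
  Matrix.of fun i j => (F i j).coeff x

/-- Fourier transform of `F ∈ M_n(ℂG)` at `π`: `F̂(π) = Σ_{x∈G} F(x) ⊗ π(x)`. -/
noncomputable def fourierM {n : ℕ} {m : Type*} (F : Matrix (Fin n) (Fin n) (MonoidAlgebra ℂ G))
    (π : G → Matrix m m ℂ) : Matrix (Fin n × m) (Fin n × m) ℂ :=
  ∑ x ∈ matSupport F, matCoeff F x ⊗ₖ π x

/-- A representation is unitary if each `π g` is a unitary matrix. -/
def IsUnitaryRep {m : Type*} [Fintype m] [DecidableEq m] (π : G →* Matrix m m ℂ) : Prop :=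
  ∀ g, π g ∈ Matrix.unitaryGroup m ℂ

/-- Irreducibility: the space is nonzero and has no nontrivial invariant subspace. -/
def IsIrred {m : Type*} [Fintype m] [DecidableEq m] (π : G →* Matrix m m ℂ) : Prop :=
  Nonempty m ∧
    ∀ W : Submodule ℂ (m → ℂ), (∀ g, ∀ v ∈ W, (π g).mulVec v ∈ W) → W = ⊥ ∨ W = ⊤

/-- Equivalence of two matrix representations: an invertible intertwiner. -/
def RepEquiv {m m' : Type*} [Fintype m] [DecidableEq m] [Fintype m'] [DecidableEq m']
    (π : G →* Matrix m m ℂ) (π' : G →* Matrix m' m' ℂ) : Prop :=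
  ∃ e : (m → ℂ) ≃ₗ[ℂ] (m' → ℂ), ∀ g v, e ((π g).mulVec v) = (π' g).mulVec (e v)

/-- λ₁: the largest real root of the characteristic polynomial
(= the largest eigenvalue, for a Hermitian matrix). -/
noncomputable def lam1 {m : Type*} [Fintype m] [DecidableEq m] (M : Matrix m m ℂ) : ℝ :=
  sSup {x : ℝ | M.charpoly.IsRoot (x : ℂ)}

/-- Spectral radius: the sup of the absolute values of the eigenvalues. -/
noncomputable def specRad {m : Type*} [Fintype m] [DecidableEq m] (M : Matrix m m ℂ) : ℝ :=
  sSup {r : ℝ | ∃ μ : ℂ, M.charpoly.IsRoot μ ∧ r = ‖μ‖}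

/-- Adjacency relation of the cover graph on `V × G`:
`(u,g) ∼ (v,h)` iff `u ∼ v` and `h = Ψ(u,v)⁻¹ g`. -/
def coverAdj {n : ℕ} (Γ : SimpleGraph (Fin n)) (Ψ : Fin n → Fin n → G) (p q : Fin n × G) :
    Prop :=
  Γ.Adj p.1 q.1 ∧ q.2 = (Ψ p.1 q.1)⁻¹ * p.2

/-- The {0,1} adjacency matrix of the cover graph. -/
noncomputable def coverMatrix {n : ℕ} [DecidableEq G] (Γ : SimpleGraph (Fin n))
    [DecidableRel Γ.Adj] (Ψ : Fin n → Fin n → G) : Matrix (Fin n × G) (Fin n × G) ℂ :=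
  Matrix.of fun p q => if Γ.Adj p.1 q.1 ∧ q.2 = (Ψ p.1 q.1)⁻¹ * p.2 then 1 else 0

/-- The left regular representation, as matrices:
`λ_G(g)_{r,p} = 1` if `g = r p⁻¹`, else `0`. -/
noncomputable def lamG [DecidableEq G] : G → Matrix G G ℂ :=
  fun g => Matrix.of fun r p => if g = r * p⁻¹ then 1 else 0

section Walks

variable {n : ℕ} {Γ : SimpleGraph (Fin n)}

@[simp]
lemma walkGain_nil {M : Type*} [Monoid M] (Ψ : Fin n → Fin n → M) {u : Fin n} :
    walkGain Ψ (SimpleGraph.Walk.nil : Γ.Walk u u) = 1 := rfl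

@[simp]
lemma walkGain_cons {M : Type*} [Monoid M] (Ψ : Fin n → Fin n → M) {u v w : Fin n}
    (h : Γ.Adj u v) (p : Γ.Walk v w) :
    walkGain Ψ (SimpleGraph.Walk.cons h p) = Ψ u v * walkGain Ψ p := by
  simp [walkGain]

lemma walkGain_append {M : Type*} [Monoid M] (Ψ : Fin n → Fin n → M) {u v w : Fin n}
    (p : Γ.Walk u v) (q : Γ.Walk v w) :
    walkGain Ψ (p.append q) = walkGain Ψ p * walkGain Ψ q := by
  simp [walkGain, SimpleGraph.Walk.darts_append]

lemma walkGain_concat {M : Type*} [Monoid M] (Ψ : Fin n → Fin n → M) {u v w : Fin n}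
    (p : Γ.Walk u v) (h : Γ.Adj v w) :
    walkGain Ψ (p.concat h) = walkGain Ψ p * Ψ v w := by
  simp [walkGain, SimpleGraph.Walk.darts_concat]

lemma walkGain_copy {M : Type*} [Monoid M] (Ψ : Fin n → Fin n → M) {u v u' v' : Fin n}
    (p : Γ.Walk u v) (hu : u = u') (hv : v = v') :
    walkGain Ψ (p.copy hu hv) = walkGain Ψ p := by
  subst hu hv
  rfl

lemma walkGain_one {M : Type*} [Monoid M] {u v : Fin n} (p : Γ.Walk u v) :
    walkGain (fun _ _ => (1 : M)) p = 1 := by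
  simp [walkGain]

lemma walkGain_reverse {M : Type*} [DivisionMonoid M] {Ψ : Fin n → Fin n → M}
    (hinv : ∀ i j, Γ.Adj i j → Ψ j i = (Ψ i j)⁻¹) {u v : Fin n} (p : Γ.Walk u v) :
    walkGain Ψ p.reverse = (walkGain Ψ p)⁻¹ := by
  induction p with
  | nil => simp
  | cons h p ih =>
    rw [SimpleGraph.Walk.reverse_cons, walkGain_append, ih, walkGain_cons, walkGain_cons,
      walkGain_nil, mul_one, hinv _ _ h, _root_.mul_inv_rev]

lemma walkGain_ne_zero {G₀ : Type*} [GroupWithZero G₀] {Ψ : Fin n → Fin n → G₀}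
    (hne : ∀ i j, Γ.Adj i j → Ψ i j ≠ 0) {u v : Fin n} (p : Γ.Walk u v) :
    walkGain Ψ p ≠ 0 := by
  induction p with
  | nil => simp
  | cons h p ih => simpa [hne _ _ h] using ih

lemma norm_walkGain {K : Type*} [NormedDivisionRing K] {Ψ : Fin n → Fin n → K}
    (hunit : ∀ i j, Γ.Adj i j → ‖Ψ i j‖ = 1) {u v : Fin n} (p : Γ.Walk u v) :
    ‖walkGain Ψ p‖ = 1 := by
  induction p with
  | nil => simp
  | cons h p ih => rw [walkGain_cons, norm_mul, ih, hunit _ _ h, mul_one]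

lemma IsBalanced.walkGain_eq {M : Type*} [DivisionMonoid M] {Ψ : Fin n → Fin n → M}
    (hB : IsBalanced Γ Ψ) (hinv : ∀ i j, Γ.Adj i j → Ψ j i = (Ψ i j)⁻¹) {u v : Fin n}
    (p q : Γ.Walk u v) : walkGain Ψ p = walkGain Ψ q := by
  have h := hB u (p.append q.reverse)
  rw [walkGain_append, walkGain_reverse hinv] at h
  simpa using eq_inv_of_mul_eq_one_left h

lemma IsBalanced.exists_potential {G₀ : Type*} [GroupWithZero G₀] {Ψ : Fin n → Fin n → G₀}
    (hB : IsBalanced Γ Ψ) (hne : ∀ i j, Γ.Adj i j → Ψ i j ≠ 0)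
    (hinv : ∀ i j, Γ.Adj i j → Ψ j i = (Ψ i j)⁻¹) :
    ∃ θ : Fin n → G₀, (∀ v, θ v ≠ 0) ∧ ∀ i j, Γ.Adj i j → θ i * Ψ i j = θ j := by
  have hroot (v : Fin n) : Γ.Reachable (Γ.connectedComponentMk v).out v :=
    SimpleGraph.ConnectedComponent.exact (Γ.connectedComponentMk v).out_eq
  refine ⟨fun v => walkGain Ψ (hroot v).some, fun v => walkGain_ne_zero hne _, fun i j h => ?_⟩
  have hij : (Γ.connectedComponentMk i).out = (Γ.connectedComponentMk j).out := by
    rw [SimpleGraph.ConnectedComponent.connectedComponentMk_eq_of_adj h]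
  calc walkGain Ψ (hroot i).some * Ψ i j
      = walkGain Ψ (((hroot i).some.concat h).copy hij rfl) := by
        rw [walkGain_copy, walkGain_concat]
    _ = walkGain Ψ (hroot j).some := hB.walkGain_eq hinv _ _

end Walks

lemma _root_.RCLike.eq_one_of_sum_eq_card {𝕜 ι : Type*} [RCLike 𝕜] {s : Finset ι} {z : ι → 𝕜}
    (hz : ∀ i ∈ s, ‖z i‖ ≤ 1) (hsum : ∑ i ∈ s, z i = s.card) : ∀ i ∈ s, z i = 1 := by
  have hre_le (i) (hi : i ∈ s) : RCLike.re (z i) ≤ 1 := (RCLike.re_le_norm _).trans (hz i hi)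
  have hre_sum : ∑ i ∈ s, RCLike.re (z i) = ∑ i ∈ s, (1 : ℝ) := by
    simpa using congrArg RCLike.re hsum
  intro i hi
  have hre : RCLike.re (z i) = 1 := (Finset.sum_eq_sum_iff_of_le hre_le).1 hre_sum i hi
  have him : RCLike.im (z i) = 0 := by
    have h := RCLike.norm_sq_eq_def (z := z i)
    nlinarith [hz i hi, norm_nonneg (z i)]
  exact RCLike.ext (by simpa using hre) (by simpa using him)

section Spectral

variable {𝕜 : Type*} [RCLike 𝕜] {ι : Type*} [Fintype ι] [DecidableEq ι]

lemma _root_.Matrix.IsHermitian.trace_pow {A : Matrix ι ι 𝕜} (hA : A.IsHermitian) (k : ℕ) :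
    (A ^ k).trace = ∑ i, (hA.eigenvalues i : 𝕜) ^ k := by
  conv_lhs => rw [hA.spectral_theorem, ← map_pow]
  rw [Unitary.conjStarAlgAut_apply, Matrix.trace_mul_cycle,
    Unitary.coe_star_mul_self, Matrix.one_mul, Matrix.diagonal_pow, Matrix.trace_diagonal]
  simp

lemma _root_.Matrix.IsHermitian.trace_pow_eq_of_charpoly_eq {A B : Matrix ι ι 𝕜}
    (hA : A.IsHermitian) (hB : B.IsHermitian) (h : A.charpoly = B.charpoly) (k : ℕ) :
    (A ^ k).trace = (B ^ k).trace := by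
  rw [hA.trace_pow, hB.trace_pow, (hA.eigenvalues_eq_eigenvalues_iff hB).2 h]

end Spectral

section GainMatrix

variable {n : ℕ} (Γ : SimpleGraph (Fin n)) [DecidableRel Γ.Adj]

def gainMatrix {R : Type*} [Zero R] (Ψ : Fin n → Fin n → R) : Matrix (Fin n) (Fin n) R :=
  Matrix.of fun i j => if Γ.Adj i j then Ψ i j else 0

lemma gainMatrix_one {R : Type*} [Semiring R] :
    gainMatrix Γ (fun _ _ => (1 : R)) = Γ.adjMatrix R := by
  ext i j
  simp [gainMatrix]

lemma isHermitian_gainMatrix {R : Type*} [Semiring R] [StarRing R] {Ψ : Fin n → Fin n → R}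
    (hstar : ∀ i j, Γ.Adj i j → star (Ψ i j) = Ψ j i) : (gainMatrix Γ Ψ).IsHermitian := by
  ext i j
  by_cases h : Γ.Adj i j
  · simp [gainMatrix, h, h.symm, hstar j i h.symm]
  · simp [gainMatrix, h, mt Γ.adj_symm h]

lemma gainMatrix_pow_apply {R : Type*} [Semiring R] (Ψ : Fin n → Fin n → R) (k : ℕ)
    (u v : Fin n) :
    (gainMatrix Γ Ψ ^ k) u v = ∑ p ∈ Γ.finsetWalkLength k u v, walkGain Ψ p := by
  induction k generalizing u v with
  | zero => obtain rfl | h := eq_or_ne u v <;> simp [SimpleGraph.finsetWalkLength, *]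
  | succ k ih =>
    rw [pow_succ', Matrix.mul_apply, SimpleGraph.finsetWalkLength, Finset.sum_biUnion]
    · have hcons (w : Γ.neighborSet u) :
          ∑ p ∈ (Γ.finsetWalkLength k w v).map
              ⟨fun p => .cons w.2 p, fun _ _ h => by cases h; rfl⟩, walkGain Ψ p =
            Ψ u w * (gainMatrix Γ Ψ ^ k) w v := by
        rw [Finset.sum_map, ih, Finset.mul_sum]
        exact Finset.sum_congr rfl fun p _ => walkGain_cons Ψ w.2 p
      rw [Finset.sum_congr rfl fun w _ => hcons w]
      calc ∑ j, gainMatrix Γ Ψ u j * (gainMatrix Γ Ψ ^ k) j v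
          = ∑ j ∈ Γ.neighborFinset u, Ψ u j * (gainMatrix Γ Ψ ^ k) j v := by
            rw [SimpleGraph.neighborFinset_eq_filter, Finset.sum_filter]
            refine Finset.sum_congr rfl fun j _ => ?_
            by_cases h : Γ.Adj u j <;> simp [gainMatrix, h]
        _ = _ := Finset.sum_subtype _ (fun w => SimpleGraph.mem_neighborFinset Γ u w) _
    · rintro ⟨x, _⟩ - ⟨y, _⟩ - hxy
      rw [Function.onFun, Finset.disjoint_left]
      intro p hp hp'
      simp only [Finset.mem_map] at hp hp'
      obtain ⟨px, _, rfl⟩ := hp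
      obtain ⟨py, _, hp⟩ := hp'
      cases hp
      simp at hxy

lemma trace_gainMatrix_pow {R : Type*} [Semiring R] (Ψ : Fin n → Fin n → R) (k : ℕ) :
    (gainMatrix Γ Ψ ^ k).trace =
      ∑ c ∈ Finset.univ.sigma fun v => Γ.finsetWalkLength k v v, walkGain Ψ c.2 := by
  rw [Finset.sum_sigma]
  exact Finset.sum_congr rfl fun v _ => gainMatrix_pow_apply Γ Ψ k v v

lemma gainMatrix_eq_diagonal_mul_adjMatrix_mul_diagonal {K : Type*} [Field K]
    {Ψ : Fin n → Fin n → K} {θ : Fin n → K} (hθ : ∀ v, θ v ≠ 0)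
    (hθΨ : ∀ i j, Γ.Adj i j → θ i * Ψ i j = θ j) :
    gainMatrix Γ Ψ = Matrix.diagonal θ⁻¹ * Γ.adjMatrix K * Matrix.diagonal θ := by
  ext i j
  rw [Matrix.mul_diagonal, Matrix.diagonal_mul]
  by_cases h : Γ.Adj i j
  · simp [gainMatrix, h, ← hθΨ i j h, hθ i]
  · simp [gainMatrix, h]

lemma charpoly_gainMatrix_eq_of_switching {K : Type*} [Field K]
    {Ψ : Fin n → Fin n → K} {θ : Fin n → K} (hθ : ∀ v, θ v ≠ 0)
    (hθΨ : ∀ i j, Γ.Adj i j → θ i * Ψ i j = θ j) :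
    (gainMatrix Γ Ψ).charpoly = (Γ.adjMatrix K).charpoly := by
  rw [gainMatrix_eq_diagonal_mul_adjMatrix_mul_diagonal Γ hθ hθΨ, Matrix.charpoly_mul_comm,
    ← Matrix.mul_assoc, Matrix.diagonal_mul_diagonal]
  simp [mul_inv_cancel₀ (hθ _)]

end GainMatrix

/-- a 𝕋-gain graph is balanced iff its complex adjacency matrix is
cospectral with the adjacency matrix of the underlying graph. -/
theorem statement13 {n : ℕ} (Γ : SimpleGraph (Fin n)) [DecidableRel Γ.Adj]
    (Ψ : Fin n → Fin n → ℂ)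
    (hunit : ∀ i j, Γ.Adj i j → ‖Ψ i j‖ = 1)
    (hinv : ∀ i j, Γ.Adj i j → Ψ j i = (Ψ i j)⁻¹) :
    IsBalanced Γ Ψ ↔
      (Matrix.of fun i j => if Γ.Adj i j then Ψ i j else 0 :
          Matrix (Fin n) (Fin n) ℂ).charpoly = (Γ.adjMatrix ℂ).charpoly := by
  constructor
  · intro hB
    have hne (i j) (h : Γ.Adj i j) : Ψ i j ≠ 0 := norm_ne_zero_iff.1 (by simp [hunit i j h])
    obtain ⟨θ, hθ, hθΨ⟩ := hB.exists_potential hne hinv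
    exact charpoly_gainMatrix_eq_of_switching Γ hθ hθΨ
  · intro hcharpoly v p
    have hstar (i j) (h : Γ.Adj i j) : star (Ψ i j) = Ψ j i := by
      rw [hinv i j h, Complex.inv_eq_conj (hunit i j h)]
      rfl
    have htrace := (isHermitian_gainMatrix Γ hstar).trace_pow_eq_of_charpoly_eq
      (Γ.isHermitian_adjMatrix ℂ) hcharpoly p.length
    rw [trace_gainMatrix_pow, ← gainMatrix_one, trace_gainMatrix_pow] at htrace
    simp only [walkGain_one, Finset.sum_const, nsmul_one] at htrace
    exact RCLike.eq_one_of_sum_eq_card (fun c _ => (norm_walkGain hunit c.2).le) htrace ⟨v, p⟩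
      (by simp [SimpleGraph.mem_finsetWalkLength_iff])

end GainPaper
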